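/- Dual feasibility of the certificate: with H' = (1/d³) 1_{A₁⊗B₁} ⊗ [τ + 2 Σ_{i<j} a_i a_j T_{A₂}(ψ⁻_{ij})], for every maximally entangled state Ψ_k on A₁⊗B₁ one has (T_{A₁}⊗T_{A₂})(H' − (1/d²) Ψ_k ⊗ τ) = (1/d³) Υ_k ⊗ Γ + (2/d³) Σ_{i<j} a_i a_j (1 − Υ_k/2) ⊗ ψ⁻_{ij}, which is positive semidefinite, where Υ_k = 1 − d T_{A₁}(Ψ_k) and Γ = T_{A₂}(τ) + Σ_{i<j} a_i a_j ψ⁻_{ij}. -/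

import Mathlib

open scoped BigOperators Kronecker ComplexOrder
open Matrix

/-- Partial transposition on the first tensor factor (standard basis). -/
def ptA {α β : Type*} (M : Matrix (α × β) (α × β) ℂ) : Matrix (α × β) (α × β) ℂ :=
  Matrix.of fun p q => M (q.1, p.2) (p.1, q.2)

/-- Partial transposition `T_{A₁} ⊗ T_{A₂}` on an operator on `(A₁⊗B₁)⊗(A₂⊗B₂)`. -/
def pt12 {α₁ β₁ α₂ β₂ : Type*}
    (M : Matrix ((α₁ × β₁) × α₂ × β₂) ((α₁ × β₁) × α₂ × β₂) ℂ) :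
    Matrix ((α₁ × β₁) × α₂ × β₂) ((α₁ × β₁) × α₂ × β₂) ℂ :=
  Matrix.of fun p q =>
    M ((q.1.1, p.1.2), (q.2.1, p.2.2)) ((p.1.1, q.1.2), (p.2.1, q.2.2))

/-- Rank-one projector `|v⟩⟨v|`. -/
def proj {n : Type*} (v : n → ℂ) : Matrix n n ℂ :=
  Matrix.of fun p q => v p * (starRingEnd ℂ) (v q)

/-- `|ψ⁻ᵢⱼ⟩ = (|i⟩|j⟩ − |j⟩|i⟩)/√2`. -/
noncomputable def psiM (d : ℕ) (i j : Fin d) : Fin d × Fin d → ℂ := fun p =>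
  ((1 / Real.sqrt 2 : ℝ) : ℂ) * ((if p = (i, j) then 1 else 0) - (if p = (j, i) then 1 else 0))

/-! Partial transposition is linear, involutive and factorises over Kronecker products, which turns
the identity into bookkeeping with four matrices. For positivity, write `|Ψ⟩ = (U ⊗ V)|Φ⟩` with
`|Φ⟩ = d^{-1/2} ∑ᵢ |ii⟩`; since `d · T_{A₁}(|Φ⟩⟨Φ|)` is the swap `F`, the operator
`G = d · T_{A₁}(Ψ)` is `F` conjugated by the unitary `Ū ⊗ V`, hence a Hermitian involution.
Then `Υ = 1 - G` and `1 - Υ/2 = (1 + G)/2` are positive because `1 ± G = (1 ± G)²/2`.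
Finally `⟨x, Γ x⟩ = ∑ᵢ aᵢ² |x_ii|² + ∑_{i<j} aᵢaⱼ |x_ij + x_ji|²/2`. -/

lemma sub_kronecker {l m n p R : Type*} [NonUnitalNonAssocRing R] (A₁ A₂ : Matrix l m R)
    (B : Matrix n p R) : (A₁ - A₂) ⊗ₖ B = A₁ ⊗ₖ B - A₂ ⊗ₖ B := by
  ext
  simp [sub_mul]

lemma kronecker_finsetSum {l m n p ι R : Type*} [NonUnitalNonAssocSemiring R] (A : Matrix l m R)
    (s : Finset ι) (B : ι → Matrix n p R) : A ⊗ₖ ∑ i ∈ s, B i = ∑ i ∈ s, A ⊗ₖ B i := by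
  ext
  simp [Matrix.sum_apply, Finset.mul_sum]

section PartialTranspose

variable {α β : Type*}

lemma ptA_add (M N : Matrix (α × β) (α × β) ℂ) : ptA (M + N) = ptA M + ptA N := rfl

lemma ptA_smul (c : ℂ) (M : Matrix (α × β) (α × β) ℂ) : ptA (c • M) = c • ptA M := rfl

lemma ptA_sum {ι : Type*} (s : Finset ι) (M : ι → Matrix (α × β) (α × β) ℂ) :
    ptA (∑ i ∈ s, M i) = ∑ i ∈ s, ptA (M i) := by
  ext
  simp [ptA, Matrix.sum_apply]

lemma ptA_ptA (M : Matrix (α × β) (α × β) ℂ) : ptA (ptA M) = M := rfl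

lemma ptA_one [DecidableEq α] [DecidableEq β] : ptA (1 : Matrix (α × β) (α × β) ℂ) = 1 := by
  ext ⟨p₁, p₂⟩ ⟨q₁, q₂⟩
  simp only [ptA, Matrix.of_apply, Matrix.one_apply, Prod.mk.injEq]
  grind

lemma isHermitian_ptA {M : Matrix (α × β) (α × β) ℂ} (hM : M.IsHermitian) :
    (ptA M).IsHermitian := by
  ext p q
  simpa [ptA] using congr_fun₂ hM (q.1, p.2) (p.1, q.2)

variable {α₁ β₁ α₂ β₂ : Type*}

lemma pt12_sub (M N : Matrix ((α₁ × β₁) × α₂ × β₂) ((α₁ × β₁) × α₂ × β₂) ℂ) :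
    pt12 (M - N) = pt12 M - pt12 N := rfl

lemma pt12_kronecker (A : Matrix (α₁ × β₁) (α₁ × β₁) ℂ) (B : Matrix (α₂ × β₂) (α₂ × β₂) ℂ) :
    pt12 (A ⊗ₖ B) = ptA A ⊗ₖ ptA B := rfl

end PartialTranspose

lemma pt12_dual_certificate_eq {d : ℕ} (hd : d ≠ 0) (a : Fin d → ℝ) (τ Ψv : Fin d × Fin d → ℂ) :
    pt12 ((1 / (d : ℂ) ^ 3) • ((1 : Matrix (Fin d × Fin d) (Fin d × Fin d) ℂ) ⊗ₖ
          (proj τ + (2 : ℂ) • ∑ i, ∑ j ∈ Finset.Ioi i,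
            ((a i * a j : ℝ) : ℂ) • ptA (proj (psiM d i j))))
        - (1 / (d : ℂ) ^ 2) • (proj Ψv ⊗ₖ proj τ))
      = (1 / (d : ℂ) ^ 3) • ((1 - (d : ℂ) • ptA (proj Ψv)) ⊗ₖ (ptA (proj τ)
          + ∑ i, ∑ j ∈ Finset.Ioi i, ((a i * a j : ℝ) : ℂ) • proj (psiM d i j)))
        + (2 / (d : ℂ) ^ 3) • ∑ i, ∑ j ∈ Finset.Ioi i, ((a i * a j : ℝ) : ℂ) •
            ((1 - (1 / 2 : ℂ) • (1 - (d : ℂ) • ptA (proj Ψv))) ⊗ₖ proj (psiM d i j)) := by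
  have hd' : (d : ℂ) ≠ 0 := Nat.cast_ne_zero.mpr hd
  simp only [pt12_sub, pt12_kronecker, ptA_one, ptA_add, ptA_smul, ptA_sum, ptA_ptA,
    ← Matrix.kronecker_smul, ← kronecker_finsetSum]
  simp only [sub_kronecker, Matrix.kronecker_add, Matrix.smul_kronecker, Matrix.kronecker_smul]
  match_scalars <;> field_simp <;> ring

section Involutions

lemma posSemidef_one_add_of_mul_self_eq_one {n 𝕜 : Type*} [Fintype n] [DecidableEq n] [RCLike 𝕜]
    {P : Matrix n n 𝕜} (hP : P.IsHermitian) (hPP : P * P = 1) : (1 + P).PosSemidef := by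
  have h : 1 + P = (1 / 2 : ℝ) • ((1 + P)ᴴ * (1 + P)) := by
    simp only [Matrix.conjTranspose_add, Matrix.conjTranspose_one, hP.eq, add_mul, mul_add,
      hPP, Matrix.one_mul, Matrix.mul_one]
    module
  rw [h]
  exact (Matrix.posSemidef_conjTranspose_mul_self _).smul (by norm_num)

variable {n : Type*} [DecidableEq n]

lemma permMatrix_mul_self [Fintype n] {R : Type*} [NonAssocSemiring R] {σ : Equiv.Perm n}
    (hσ : σ * σ = 1) : σ.permMatrix R * σ.permMatrix R = 1 := by
  rw [← Matrix.permMatrix_mul, hσ, Matrix.permMatrix_one]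

lemma isHermitian_permMatrix {R : Type*} [NonAssocSemiring R] [StarRing R] {σ : Equiv.Perm n}
    (hσ : σ * σ = 1) : (σ.permMatrix R).IsHermitian := by
  rw [Matrix.IsHermitian, Matrix.conjTranspose_permMatrix, inv_eq_of_mul_eq_one_right hσ]

lemma prodComm_mul_self (n : Type*) :
    (Equiv.prodComm n n : Equiv.Perm (n × n)) * Equiv.prodComm n n = 1 := rfl

abbrev swapMatrix (n : Type*) [DecidableEq n] : Matrix (n × n) (n × n) ℂ :=
  Equiv.Perm.permMatrix ℂ (Equiv.prodComm n n)

variable [Fintype n]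

lemma mul_self_unitary_conj_eq_one {R : Type*} [CommRing R] [StarRing R] {U F : Matrix n n R}
    (hU : U ∈ Matrix.unitaryGroup n R) (hF : F * F = 1) : U * F * Uᴴ * (U * F * Uᴴ) = 1 := by
  have hUU : Uᴴ * U = 1 := Matrix.mem_unitaryGroup_iff'.mp hU
  calc U * F * Uᴴ * (U * F * Uᴴ) = U * F * (Uᴴ * U) * F * Uᴴ := by simp only [Matrix.mul_assoc]
    _ = 1 := by
      rw [hUU, Matrix.mul_one, Matrix.mul_assoc U, hF, Matrix.mul_one]
      exact Matrix.mem_unitaryGroup_iff.mp hU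

lemma of_mem_unitaryGroup {u : n → n → ℂ}
    (hu : ∀ i j, ∑ x, (starRingEnd ℂ) (u i x) * u j x = if i = j then 1 else 0) :
    Matrix.of u ∈ Matrix.unitaryGroup n ℂ := by
  rw [Matrix.mem_unitaryGroup_iff]
  ext i j
  simp only [Matrix.mul_apply, Matrix.star_apply, Matrix.of_apply, Matrix.one_apply,
    eq_comm (a := i)]
  rw [← hu j i]
  exact Finset.sum_congr rfl fun x _ => mul_comm _ _

end Involutions

section MaximallyEntangled

variable {d : ℕ} (α β : Fin d → Fin d → ℂ) (Ψv : Fin d × Fin d → ℂ)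

lemma natCast_smul_ptA_proj_eq (hd : d ≠ 0)
    (hΨv : ∀ p, Ψv p = ((1 / Real.sqrt d : ℝ) : ℂ) * ∑ i, α i p.1 * β i p.2) :
    (d : ℂ) • ptA (proj Ψv) = ((Matrix.of α)ᴴ ⊗ₖ (Matrix.of β)ᵀ)
      * swapMatrix (Fin d) * ((Matrix.of α)ᴴ ⊗ₖ (Matrix.of β)ᵀ)ᴴ := by
  have hd' : (d : ℂ) * ((Real.sqrt d : ℂ)⁻¹ * (Real.sqrt d : ℂ)⁻¹) = 1 := by
    rw [← mul_inv, ← Complex.ofReal_mul, Real.mul_self_sqrt d.cast_nonneg, Complex.ofReal_natCast,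
      mul_inv_cancel₀ (Nat.cast_ne_zero.mpr hd)]
  ext p q
  simp only [ptA, proj, hΨv, one_div, Complex.ofReal_inv, map_mul, map_inv₀, Complex.conj_ofReal,
    map_sum, Matrix.of_apply, Matrix.smul_apply, smul_eq_mul, Matrix.mul_apply,
    Matrix.kroneckerMap_apply, Matrix.conjTranspose_apply, RCLike.star_def,
    Matrix.transpose_apply, PEquiv.toMatrix_apply, Equiv.toPEquiv_apply, Equiv.prodComm_apply,
    Option.mem_def, Option.some.injEq, mul_ite, mul_one, mul_zero, Fintype.sum_prod_type,
    Prod.swap_prod_mk, star_mul', RingHomCompTriple.comp_apply, RingHom.id_apply, Prod.mk.injEq,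
    ite_and, Finset.sum_ite_eq', Finset.mem_univ, ↓reduceIte]
  rw [mul_mul_mul_comm, ← mul_assoc, hd', one_mul, Finset.sum_mul_sum]
  exact Finset.sum_congr rfl fun i _ => Finset.sum_congr rfl fun j _ => by ring

lemma natCast_smul_ptA_proj_involutive (hd : d ≠ 0)
    (hΨv : ∀ p, Ψv p = ((1 / Real.sqrt d : ℝ) : ℂ) * ∑ i, α i p.1 * β i p.2)
    (hα : ∀ i j, ∑ x, (starRingEnd ℂ) (α i x) * α j x = if i = j then 1 else 0)
    (hβ : ∀ i j, ∑ x, (starRingEnd ℂ) (β i x) * β j x = if i = j then 1 else 0) :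
    ((d : ℂ) • ptA (proj Ψv)).IsHermitian ∧
      (d : ℂ) • ptA (proj Ψv) * ((d : ℂ) • ptA (proj Ψv)) = 1 := by
  rw [natCast_smul_ptA_proj_eq α β Ψv hd hΨv]
  have hU : (Matrix.of α)ᴴ ⊗ₖ (Matrix.of β)ᵀ ∈ Matrix.unitaryGroup (Fin d × Fin d) ℂ :=
    Matrix.kronecker_mem_unitary (Unitary.star_mem (of_mem_unitaryGroup hα))
      (Matrix.transpose_mem_unitaryGroup_iff.mpr (of_mem_unitaryGroup hβ))
  exact ⟨Matrix.isHermitian_mul_mul_conjTranspose _ (isHermitian_permMatrix (prodComm_mul_self _)),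
    mul_self_unitary_conj_eq_one hU (permMatrix_mul_self (prodComm_mul_self _))⟩

end MaximallyEntangled

section Gamma

lemma posSemidef_proj {n : Type*} [Fintype n] (v : n → ℂ) : (proj v).PosSemidef :=
  Matrix.posSemidef_vecMulVec_self_star v

lemma dotProduct_proj_mulVec {n : Type*} [Fintype n] (v x : n → ℂ) :
    star x ⬝ᵥ (proj v *ᵥ x) = star (star v ⬝ᵥ x) * (star v ⬝ᵥ x) := by
  rw [show proj v = vecMulVec v (star v) from rfl, vecMulVec_mulVec, op_smul_eq_smul, dotProduct_smul, smul_eq_mul,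
    star_dotProduct, star_star, mul_comm]

lemma star_psiM_dotProduct {d : ℕ} (i j : Fin d) (x : Fin d × Fin d → ℂ) :
    star (psiM d i j) ⬝ᵥ x = ((1 / Real.sqrt 2 : ℝ) : ℂ) * (x (i, j) - x (j, i)) := by
  simp only [psiM, dotProduct, Pi.star_apply, star_mul', Complex.star_def, Complex.conj_ofReal,
    map_sub, apply_ite (starRingEnd ℂ), map_one, map_zero, mul_assoc, ← Finset.mul_sum, sub_mul,
    ite_mul, one_mul, zero_mul, Finset.sum_sub_distrib, Finset.sum_ite_eq', Finset.mem_univ,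
    if_true]

lemma sum_sum_eq_sum_diag_add_sum_sum_Ioi {M : Type*} [AddCommMonoid M] {d : ℕ}
    (f : Fin d → Fin d → M) :
    ∑ i, ∑ j, f i j = ∑ i, f i i + ∑ i, ∑ j ∈ Finset.Ioi i, (f i j + f j i) := by
  rw [Finset.sum_sum_Ioi_add_eq_sum_sum_off_diag (fun i j => f j i), ← Finset.sum_add_distrib]
  refine Finset.sum_congr rfl fun i _ => ?_
  rw [add_comm, ← Finset.sum_compl_add_sum {i} (f i), Finset.sum_singleton]

variable {d : ℕ} (a : Fin d → ℝ) (τ : Fin d × Fin d → ℂ)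

lemma dotProduct_ptA_proj_diag_mulVec
    (hτ : ∀ p : Fin d × Fin d, τ p = if p.1 = p.2 then (a p.1 : ℂ) else 0) (x : Fin d × Fin d → ℂ) :
    star x ⬝ᵥ (ptA (proj τ) *ᵥ x)
      = ∑ i, ∑ j, ((a i * a j : ℝ) : ℂ) * (star (x (i, j)) * x (j, i)) := by
  simp only [dotProduct, Matrix.mulVec, ptA, proj, Matrix.of_apply, Pi.star_apply, hτ,
    Fintype.sum_prod_type]
  refine Finset.sum_congr rfl fun i _ => Finset.sum_congr rfl fun j _ => ?_
  simp only [apply_ite (starRingEnd ℂ), Complex.conj_ofReal, map_zero, ite_mul, zero_mul,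
    mul_ite, mul_zero, Finset.sum_ite_eq', Finset.sum_ite_eq, Finset.mem_univ, if_true]
  push_cast
  ring

lemma dotProduct_gamma_mulVec
    (hτ : ∀ p : Fin d × Fin d, τ p = if p.1 = p.2 then (a p.1 : ℂ) else 0) (x : Fin d × Fin d → ℂ) :
    star x ⬝ᵥ ((ptA (proj τ) + ∑ i, ∑ j ∈ Finset.Ioi i,
        ((a i * a j : ℝ) : ℂ) • proj (psiM d i j)) *ᵥ x)
      = ∑ i, ((a i * a i : ℝ) : ℂ) * (star (x (i, i)) * x (i, i))
        + ∑ i, ∑ j ∈ Finset.Ioi i, ((a i * a j : ℝ) : ℂ) *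
            ((1 / 2 : ℂ) * (star (x (i, j) + x (j, i)) * (x (i, j) + x (j, i)))) := by
  have hψ (i j : Fin d) : star x ⬝ᵥ (proj (psiM d i j) *ᵥ x)
      = (1 / 2 : ℂ) * (star (x (i, j) - x (j, i)) * (x (i, j) - x (j, i))) := by
    have h2 : ((1 / Real.sqrt 2 : ℝ) : ℂ) * ((1 / Real.sqrt 2 : ℝ) : ℂ) = 1 / 2 := by
      rw [← Complex.ofReal_mul, div_mul_div_comm, one_mul, Real.mul_self_sqrt zero_le_two]
      norm_num
    rw [dotProduct_proj_mulVec, star_psiM_dotProduct, star_mul', Complex.star_def,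
      Complex.conj_ofReal, ← h2]
    ring
  simp only [Matrix.add_mulVec, dotProduct_add, Matrix.sum_mulVec, dotProduct_sum,
    Matrix.smul_mulVec, dotProduct_smul, smul_eq_mul, hψ, dotProduct_ptA_proj_diag_mulVec a τ hτ]
  rw [sum_sum_eq_sum_diag_add_sum_sum_Ioi, add_assoc, ← Finset.sum_add_distrib]
  refine congrArg (_ + ·) (Finset.sum_congr rfl fun i _ => ?_)
  rw [← Finset.sum_add_distrib]
  refine Finset.sum_congr rfl fun j _ => ?_
  simp only [star_add, star_sub]
  push_cast
  ring

lemma posSemidef_gamma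
    (hτ : ∀ p : Fin d × Fin d, τ p = if p.1 = p.2 then (a p.1 : ℂ) else 0) (ha : ∀ i, 0 ≤ a i) :
    (ptA (proj τ) + ∑ i, ∑ j ∈ Finset.Ioi i,
      ((a i * a j : ℝ) : ℂ) • proj (psiM d i j)).PosSemidef := by
  have hS : (∑ i, ∑ j ∈ Finset.Ioi i, ((a i * a j : ℝ) : ℂ) • proj (psiM d i j)).PosSemidef :=
    Matrix.posSemidef_sum _ fun i _ => Matrix.posSemidef_sum _ fun j _ =>
      (posSemidef_proj _).smul (by have := ha i; have := ha j; positivity)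
  refine .of_dotProduct_mulVec_nonneg
    ((isHermitian_ptA (posSemidef_proj τ).isHermitian).add hS.isHermitian) fun x => ?_
  rw [dotProduct_gamma_mulVec a τ hτ x]
  refine add_nonneg (Finset.sum_nonneg fun i _ => mul_nonneg ?_ (star_mul_self_nonneg _))
    (Finset.sum_nonneg fun i _ => Finset.sum_nonneg fun j _ =>
      mul_nonneg ?_ (mul_nonneg (by positivity) (star_mul_self_nonneg _)))
  · have := ha i; positivity
  · have := ha i; have := ha j; positivity

end Gamma
theorem stmt15_general (d : ℕ) (hd : 0 < d) (a : Fin d → ℝ) (ha : ∀ i, 0 ≤ a i)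
    (τ : Fin d × Fin d → ℂ)
    (hτ : ∀ p : Fin d × Fin d, τ p = if p.1 = p.2 then (a p.1 : ℂ) else 0)
    (α β : Fin d → Fin d → ℂ)
    (hα : ∀ i j, ∑ x, (starRingEnd ℂ) (α i x) * α j x = if i = j then 1 else 0)
    (hβ : ∀ i j, ∑ x, (starRingEnd ℂ) (β i x) * β j x = if i = j then 1 else 0)
    (Ψv : Fin d × Fin d → ℂ)
    (hΨv : ∀ p, Ψv p = ((1 / Real.sqrt d : ℝ) : ℂ) * ∑ i, α i p.1 * β i p.2)
    (Υ Γ : Matrix (Fin d × Fin d) (Fin d × Fin d) ℂ)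
    (hΥ : Υ = 1 - (d : ℂ) • ptA (proj Ψv))
    (hΓ : Γ = ptA (proj τ)
        + ∑ i, ∑ j ∈ Finset.Ioi i, ((a i * a j : ℝ) : ℂ) • proj (psiM d i j))
    (H' : Matrix ((Fin d × Fin d) × Fin d × Fin d) ((Fin d × Fin d) × Fin d × Fin d) ℂ)
    (hH' : H' = (1 / (d : ℂ) ^ 3) •
        ((1 : Matrix (Fin d × Fin d) (Fin d × Fin d) ℂ) ⊗ₖ
          (proj τ + (2 : ℂ) • ∑ i, ∑ j ∈ Finset.Ioi i,
            ((a i * a j : ℝ) : ℂ) • ptA (proj (psiM d i j))))) :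
    (pt12 (H' - (1 / (d : ℂ) ^ 2) • (proj Ψv ⊗ₖ proj τ))
        = (1 / (d : ℂ) ^ 3) • (Υ ⊗ₖ Γ)
          + (2 / (d : ℂ) ^ 3) • ∑ i, ∑ j ∈ Finset.Ioi i,
              ((a i * a j : ℝ) : ℂ) • ((1 - (1 / 2 : ℂ) • Υ) ⊗ₖ proj (psiM d i j)))
    ∧ (pt12 (H' - (1 / (d : ℂ) ^ 2) • (proj Ψv ⊗ₖ proj τ))).PosSemidef := by
  have hId := pt12_dual_certificate_eq hd.ne' a τ Ψv
  rw [← hΥ, ← hΓ, ← hH'] at hId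
  refine ⟨hId, hId ▸ ?_⟩
  obtain ⟨hG, hGG⟩ := natCast_smul_ptA_proj_involutive α β Ψv hd.ne' hΨv hα hβ
  have hΥpsd : Υ.PosSemidef := by
    rw [hΥ, sub_eq_add_neg]
    exact posSemidef_one_add_of_mul_self_eq_one hG.neg (by rw [neg_mul_neg, hGG])
  have hΥhalf : (1 - (1 / 2 : ℂ) • Υ).PosSemidef := by
    rw [hΥ, show 1 - (1 / 2 : ℂ) • (1 - (d : ℂ) • ptA (proj Ψv))
      = (1 / 2 : ℝ) • (1 + (d : ℂ) • ptA (proj Ψv)) by module]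
    exact (posSemidef_one_add_of_mul_self_eq_one hG hGG).smul (by norm_num)
  have hΓpsd : Γ.PosSemidef := hΓ ▸ posSemidef_gamma a τ hτ ha
  exact ((hΥpsd.kronecker hΓpsd).smul (by positivity)).add
    ((Matrix.posSemidef_sum _ fun i _ => Matrix.posSemidef_sum _ fun j _ =>
      (hΥhalf.kronecker (posSemidef_proj _)).smul
        (by have := ha i; have := ha j; positivity)).smul (by positivity))

/-- Dual feasibility of the certificate: with
`H' = (1/d³) 1 ⊗ [τ + 2∑_{i<j} aᵢaⱼ T_{A₂}(ψ⁻ᵢⱼ)]`, for every maximally entangled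
state `Ψₖ = |Ψ⟩⟨Ψ|`, `|Ψ⟩ = (1/√d)∑ᵢ|αᵢ⟩|βᵢ⟩` on `A₁⊗B₁`, one has
`(T_{A₁}⊗T_{A₂})(H' − (1/d²)Ψₖ⊗τ) = (1/d³)Υₖ⊗Γ + (2/d³)∑_{i<j} aᵢaⱼ (1 − Υₖ/2)⊗ψ⁻ᵢⱼ`,
which is positive semidefinite, where `Υₖ = 1 − d·T_{A₁}(Ψₖ)` and
`Γ = T_{A₂}(τ) + ∑_{i<j} aᵢaⱼ ψ⁻ᵢⱼ`. -/
theorem stmt15 (d : ℕ) (hd : 0 < d) (a : Fin d → ℝ) (ha : ∀ i, 0 ≤ a i)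
    (hsum : ∑ i, (a i) ^ 2 = 1)
    (τ : Fin d × Fin d → ℂ)
    (hτ : ∀ p : Fin d × Fin d, τ p = if p.1 = p.2 then (a p.1 : ℂ) else 0)
    (α β : Fin d → Fin d → ℂ)
    (hα : ∀ i j, ∑ x, (starRingEnd ℂ) (α i x) * α j x = if i = j then 1 else 0)
    (hβ : ∀ i j, ∑ x, (starRingEnd ℂ) (β i x) * β j x = if i = j then 1 else 0)
    (Ψv : Fin d × Fin d → ℂ)
    (hΨv : ∀ p, Ψv p = ((1 / Real.sqrt d : ℝ) : ℂ) * ∑ i, α i p.1 * β i p.2)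
    (Υ Γ : Matrix (Fin d × Fin d) (Fin d × Fin d) ℂ)
    (hΥ : Υ = 1 - (d : ℂ) • ptA (proj Ψv))
    (hΓ : Γ = ptA (proj τ)
        + ∑ i, ∑ j ∈ Finset.Ioi i, ((a i * a j : ℝ) : ℂ) • proj (psiM d i j))
    (H' : Matrix ((Fin d × Fin d) × Fin d × Fin d) ((Fin d × Fin d) × Fin d × Fin d) ℂ)
    (hH' : H' = (1 / (d : ℂ) ^ 3) •
        ((1 : Matrix (Fin d × Fin d) (Fin d × Fin d) ℂ) ⊗ₖ
          (proj τ + (2 : ℂ) • ∑ i, ∑ j ∈ Finset.Ioi i,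
            ((a i * a j : ℝ) : ℂ) • ptA (proj (psiM d i j))))) :
    (pt12 (H' - (1 / (d : ℂ) ^ 2) • (proj Ψv ⊗ₖ proj τ))
        = (1 / (d : ℂ) ^ 3) • (Υ ⊗ₖ Γ)
          + (2 / (d : ℂ) ^ 3) • ∑ i, ∑ j ∈ Finset.Ioi i,
              ((a i * a j : ℝ) : ℂ) • ((1 - (1 / 2 : ℂ) • Υ) ⊗ₖ proj (psiM d i j)))
    ∧ (pt12 (H' - (1 / (d : ℂ) ^ 2) • (proj Ψv ⊗ₖ proj τ))).PosSemidef :=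
  stmt15_general d hd a ha τ hτ α β hα hβ Ψv hΨv Υ Γ hΥ hΓ H' hH'
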